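/- For t > 0 define c_t = cosh(πt/4) + cosh(3πt/4) − coth(πt)·(sinh(πt/4) + sinh(3πt/4)). Then for every integer j ≥ 0, Σ_{k=1+4j}^{4+4j} cos((2k+1)π/4)·c_{2k+1} < 0. -/

import Mathlib

open Real Filter Set Topology

/-!
With `a = πt/4` and `u = cosh a`, the hyperbolic multiple-angle formulas collapse `c t` to
`cosh a / cosh 2a = u / (2u² - 1)`, which strictly decreases as `t > 0` grows. On the block
`k = 4j+1, …, 4j+4` the factors `cos((2k+1)π/4)` are `-√2/2, -√2/2, √2/2, √2/2`, so the block sum is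
`√2/2 · ((c(8j+7) - c(8j+3)) + (c(8j+9) - c(8j+5)))`, a positive multiple of a negative number.
-/

/-- `c t = cosh(πt/4) + cosh(3πt/4) − coth(πt)·(sinh(πt/4) + sinh(3πt/4))`. -/
noncomputable def c (t : ℝ) : ℝ :=
  Real.cosh (π * t / 4) + Real.cosh (3 * π * t / 4) -
    (Real.cosh (π * t) / Real.sinh (π * t)) * (Real.sinh (π * t / 4) + Real.sinh (3 * π * t / 4))

theorem cosh_add_cosh_three_mul_sub_coth_four_mul {a : ℝ} (ha : a ≠ 0) :
    cosh a + cosh (3 * a) - cosh (4 * a) / sinh (4 * a) * (sinh a + sinh (3 * a)) =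
      cosh a / cosh (2 * a) := by
  have hs : sinh a ≠ 0 := sinh_ne_zero.2 ha
  rw [show 4 * a = 2 * (2 * a) by ring]
  simp only [cosh_two_mul, sinh_two_mul, cosh_three_mul, sinh_three_mul]
  field_simp
  linear_combination
    (16 * cosh a ^ 4 + (28 * sinh a ^ 2 + 4) * cosh a ^ 2 + 4 * sinh a ^ 4) * cosh_sq a

theorem c_eq_cosh_div_cosh {t : ℝ} (ht : t ≠ 0) : c t = cosh (π * t / 4) / cosh (π * t / 2) := by
  have h := cosh_add_cosh_three_mul_sub_coth_four_mul (a := π * t / 4) (by positivity)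
  rw [show 3 * (π * t / 4) = 3 * π * t / 4 by ring, show 4 * (π * t / 4) = π * t by ring,
    show 2 * (π * t / 4) = π * t / 2 by ring] at h
  exact h

theorem cosh_div_cosh_two_mul_lt_of_lt {x y : ℝ} (hx : 0 ≤ x) (hxy : x < y) :
    cosh y / cosh (2 * y) < cosh x / cosh (2 * x) := by
  have huv : cosh x < cosh y := cosh_strictMonoOn hx (hx.trans hxy.le) hxy
  have hu : 1 ≤ cosh x := one_le_cosh x
  rw [div_lt_div_iff₀ (cosh_pos _) (cosh_pos _), cosh_two_mul, cosh_two_mul, sinh_sq, sinh_sq]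
  nlinarith [mul_pos (sub_pos.2 huv) (by positivity : 0 < 2 * cosh x * cosh y + 1)]

theorem c_strictAntiOn : StrictAntiOn c (Ioi 0) := by
  intro s hs t ht hst
  rw [c_eq_cosh_div_cosh (ne_of_gt ht), c_eq_cosh_div_cosh (ne_of_gt hs),
    show π * t / 2 = 2 * (π * t / 4) by ring, show π * s / 2 = 2 * (π * s / 4) by ring]
  exact cosh_div_cosh_two_mul_lt_of_lt (by positivity [mem_Ioi.1 hs])
    (by have := pi_pos; nlinarith)

theorem Finset.sum_Icc_add_one_add_four {M : Type*} [AddCommMonoid M] (f : ℕ → M) (m : ℕ) :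
    ∑ k ∈ Finset.Icc (m + 1) (m + 4), f k = f (m + 1) + f (m + 2) + f (m + 3) + f (m + 4) := by
  rw [← Finset.Ico_succ_right_eq_Icc, Finset.sum_Ico_eq_sum_range, Nat.succ_eq_succ,
    show (m + 4).succ - (m + 1) = 4 by omega]
  simp [Finset.sum_range_succ, add_assoc]

theorem cos_odd_mul_pi_div_four_add_eight_mul (j : ℕ) (x : ℝ) :
    cos ((2 * (4 * j + x) + 1) * π / 4) = cos ((2 * x + 1) * π / 4) := by
  rw [show (2 * (4 * j + x) + 1) * π / 4 = (2 * x + 1) * π / 4 + j * (2 * π) by ring,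
    cos_add_nat_mul_two_pi]

theorem cos_odd_mul_pi_div_four_values :
    cos ((2 * 1 + 1) * π / 4) = -(√2 / 2) ∧ cos ((2 * 2 + 1) * π / 4) = -(√2 / 2) ∧
      cos ((2 * 3 + 1) * π / 4) = √2 / 2 ∧ cos ((2 * 4 + 1) * π / 4) = √2 / 2 := by
  refine ⟨?_, ?_, ?_, ?_⟩
  · rw [show (2 * 1 + 1) * π / 4 = π - π / 4 by ring, cos_pi_sub, cos_pi_div_four]
  · rw [show (2 * 2 + 1) * π / 4 = π / 4 + π by ring, cos_add_pi, cos_pi_div_four]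
  · rw [show (2 * 3 + 1) * π / 4 = 2 * π - π / 4 by ring, cos_two_pi_sub, cos_pi_div_four]
  · rw [show (2 * 4 + 1) * π / 4 = π / 4 + 2 * π by ring, cos_add_two_pi, cos_pi_div_four]

theorem stmt8 :
    ∀ j : ℕ, ∑ k ∈ Finset.Icc (1 + 4 * j) (4 + 4 * j),
      Real.cos ((2 * k + 1) * π / 4) * c (2 * k + 1) < 0 := by
  intro j
  obtain ⟨h1, h2, h3, h4⟩ := cos_odd_mul_pi_div_four_values
  rw [add_comm 1, add_comm 4, Finset.sum_Icc_add_one_add_four]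
  push_cast
  simp only [cos_odd_mul_pi_div_four_add_eight_mul, h1, h2, h3, h4]
  have h13 : c (2 * (4 * j + 3) + 1) < c (2 * (4 * j + 1) + 1) :=
    c_strictAntiOn (mem_Ioi.2 (by positivity)) (mem_Ioi.2 (by positivity)) (by linarith)
  have h24 : c (2 * (4 * j + 4) + 1) < c (2 * (4 * j + 2) + 1) :=
    c_strictAntiOn (mem_Ioi.2 (by positivity)) (mem_Ioi.2 (by positivity)) (by linarith)
  nlinarith [sqrt_pos.2 (two_pos : (0:ℝ) < 2)]
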